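/- Let K be a finitely generated subgroup of the free group F_A with complete Stallings automaton S(K) = (Q, A, δ, q₀) (equivalently, K has finite index), and suppose K is nontrivial. Then K is normal in F_A if and only if the transition monoid M(K) is a group of cardinality |Q|. -/

import Mathlib

/-!
In a complete inverse automaton every word `w` acts on `Q` by a permutation `q ↦ q·w`, and `w` represents an element
of `K` exactly when `q₀·w = q₀`. So `K` is normal iff every loop at `q₀` is a loop at every state
(conjugating by a word leading from `q₀` to `q` moves loops at `q₀` to loops at `q`). The same
condition says that evaluation at `q₀` is injective on `M(K)`; since it is always surjective by
connectedness, this is `|M(K)| = |Q|`. Finally `M(K)` is always a group, the inverse of the action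
of `w` being that of its formal inverse.
-/

/-- Reading a word over `Ã = A × Bool` in a complete deterministic automaton. -/
def readT {Q A : Type} (δ : Q → A × Bool → Q) : Q → List (A × Bool) → Q
  | q, [] => q
  | q, x :: w => readT δ (δ q x) w

section Automaton

variable {Q A : Type} {δ : Q → A × Bool → Q}

theorem readT_append (q : Q) (u v : List (A × Bool)) :
    readT δ q (u ++ v) = readT δ (readT δ q u) v := by
  induction u generalizing q with
  | nil => rfl
  | cons x u ih => exact ih _

theorem readT_readT_invRev (hinv : ∀ (q : Q) (a : A) (b : Bool), δ (δ q (a, b)) (a, !b) = q)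
    (q : Q) (w : List (A × Bool)) : readT δ (readT δ q w) (FreeGroup.invRev w) = q := by
  induction w generalizing q with
  | nil => rfl
  | cons x w ih =>
    rw [FreeGroup.invRev_cons, readT_append]
    exact (congrArg (readT δ · _) (ih _)).trans (hinv q x.1 x.2)

theorem readT_invRev_readT (hinv : ∀ (q : Q) (a : A) (b : Bool), δ (δ q (a, b)) (a, !b) = q)
    (q : Q) (w : List (A × Bool)) : readT δ (readT δ q (FreeGroup.invRev w)) w = q := by
  simpa only [FreeGroup.invRev_invRev] using readT_readT_invRev hinv q (FreeGroup.invRev w)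

theorem readT_left_injective
    (hinv : ∀ (q : Q) (a : A) (b : Bool), δ (δ q (a, b)) (a, !b) = q) (w : List (A × Bool)) :
    Function.Injective (readT δ · w) :=
  Function.LeftInverse.injective (g := (readT δ · (FreeGroup.invRev w)))
    (readT_readT_invRev hinv · w)

variable (δ) in
/-- The transition monoid `M(K)`. -/
def transitionMaps : Set (Q → Q) := Set.range fun w q => readT δ q w

theorem exists_inverse_of_mem_transitionMaps
    (hinv : ∀ (q : Q) (a : A) (b : Bool), δ (δ q (a, b)) (a, !b) = q) :
    ∀ f ∈ transitionMaps δ, ∃ g ∈ transitionMaps δ, f ∘ g = id ∧ g ∘ f = id := by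
  rintro f ⟨w, rfl⟩
  exact ⟨_, ⟨FreeGroup.invRev w, rfl⟩, funext (readT_invRev_readT hinv · w),
    funext (readT_readT_invRev hinv · w)⟩

variable (δ) in
def LoopsAreGlobal (q₀ : Q) : Prop :=
  ∀ w : List (A × Bool), readT δ q₀ w = q₀ → ∀ q, readT δ q w = q

theorem surjective_eval_transitionMaps {q₀ : Q}
    (hconn : ∀ q : Q, ∃ w : List (A × Bool), readT δ q₀ w = q) :
    Function.Surjective fun f : transitionMaps δ => f.1 q₀ := fun q =>
  let ⟨w, hw⟩ := hconn q
  ⟨⟨_, w, rfl⟩, hw⟩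

theorem injective_eval_transitionMaps_iff {q₀ : Q}
    (hinv : ∀ (q : Q) (a : A) (b : Bool), δ (δ q (a, b)) (a, !b) = q) :
    Function.Injective (fun f : transitionMaps δ => f.1 q₀) ↔ LoopsAreGlobal δ q₀ := by
  constructor
  · intro hinj w hw q
    have h : (⟨_, w, rfl⟩ : transitionMaps δ) = ⟨_, [], rfl⟩ := hinj hw
    exact congrFun (congrArg Subtype.val h) q
  · rintro hloops ⟨_, w, rfl⟩ ⟨_, v, rfl⟩ (h : readT δ q₀ w = readT δ q₀ v)
    have hloop : readT δ q₀ (w ++ FreeGroup.invRev v) = q₀ := by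
      rw [readT_append, h, readT_readT_invRev hinv]
    refine Subtype.ext (funext fun q => readT_left_injective hinv (FreeGroup.invRev v) ?_)
    simpa only [readT_readT_invRev hinv, ← readT_append] using hloops _ hloop q

theorem ncard_transitionMaps_eq_card_iff [Fintype Q] {q₀ : Q}
    (hinv : ∀ (q : Q) (a : A) (b : Bool), δ (δ q (a, b)) (a, !b) = q)
    (hconn : ∀ q : Q, ∃ w : List (A × Bool), readT δ q₀ w = q) :
    (transitionMaps δ).ncard = Fintype.card Q ↔ LoopsAreGlobal δ q₀ := by
  rw [← injective_eval_transitionMaps_iff hinv, ← Nat.card_coe_set_eq,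
    ← Nat.card_eq_fintype_card]
  have hsurj := surjective_eval_transitionMaps (δ := δ) hconn
  exact ⟨fun h => ((Nat.bijective_iff_surjective_and_card _).2 ⟨hsurj, h⟩).1,
    fun h => Nat.card_eq_of_bijective _ ⟨h, hsurj⟩⟩

theorem mk_conj (u w : List (A × Bool)) :
    FreeGroup.mk u * FreeGroup.mk w * (FreeGroup.mk u)⁻¹ =
      FreeGroup.mk (u ++ w ++ FreeGroup.invRev u) := by
  rw [FreeGroup.inv_mk, FreeGroup.mul_mk, FreeGroup.mul_mk]

theorem normal_iff_loopsAreGlobal {K : Subgroup (FreeGroup A)} {q₀ : Q}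
    (hinv : ∀ (q : Q) (a : A) (b : Bool), δ (δ q (a, b)) (a, !b) = q)
    (hconn : ∀ q : Q, ∃ w : List (A × Bool), readT δ q₀ w = q)
    (hlink : ∀ w : List (A × Bool), FreeGroup.mk w ∈ K ↔ readT δ q₀ w = q₀) :
    K.Normal ↔ LoopsAreGlobal δ q₀ := by
  constructor
  · intro hN w hw q
    obtain ⟨u, rfl⟩ := hconn q
    have hconj := (hlink _).1 (mk_conj u w ▸ hN.conj_mem _ ((hlink w).2 hw) (FreeGroup.mk u))
    rw [readT_append, readT_append] at hconj
    refine readT_left_injective hinv (FreeGroup.invRev u) (hconj.trans ?_)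
    exact (readT_readT_invRev hinv q₀ u).symm
  · intro hloops
    classical
    refine ⟨fun n hn g => ?_⟩
    rw [← FreeGroup.mk_toWord (x := n), ← FreeGroup.mk_toWord (x := g), mk_conj, hlink,
      readT_append, readT_append]
    rw [← FreeGroup.mk_toWord (x := n), hlink] at hn
    rw [hloops _ hn, readT_readT_invRev hinv]

end Automaton

theorem stmt_6_general {A Q : Type} [Fintype Q] (K : Subgroup (FreeGroup A))
    (δ : Q → A × Bool → Q) (q₀ : Q)
    -- complete inverse automaton: each letter acts with inverse given by the involution
    (hinv : ∀ (q : Q) (a : A) (b : Bool), δ (δ q (a, b)) (a, !b) = q)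
    -- connected with basepoint q₀:
    (hconn : ∀ q : Q, ∃ w : List (A × Bool), readT δ q₀ w = q)
    -- loops at the basepoint spell exactly the words representing elements of K:
    (hlink : ∀ w : List (A × Bool), FreeGroup.mk w ∈ K ↔ readT δ q₀ w = q₀) :
    K.Normal ↔
      ((∀ f ∈ Set.range (fun w : List (A × Bool) => fun q : Q => readT δ q w),
          ∃ g ∈ Set.range (fun w : List (A × Bool) => fun q : Q => readT δ q w),
            f ∘ g = id ∧ g ∘ f = id) ∧
        (Set.range (fun w : List (A × Bool) => fun q : Q => readT δ q w)).ncard =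
          Fintype.card Q) := by
  rw [normal_iff_loopsAreGlobal hinv hconn hlink]
  change _ ↔ (∀ f ∈ transitionMaps δ, _) ∧ (transitionMaps δ).ncard = _
  rw [ncard_transitionMaps_eq_card_iff hinv hconn]
  exact ⟨fun h => ⟨exists_inverse_of_mem_transitionMaps hinv, h⟩, And.right⟩

/-- Let `K` be a nontrivial finitely generated subgroup of `F_A` whose
Stallings automaton `S(K) = (Q, A, δ, q₀)` is complete (equivalently, `K` has finite
index). Then `K` is normal in `F_A` iff the transition monoid `M(K)` is a group of
cardinality `|Q|`. -/
theorem stmt_6 {A Q : Type} [Fintype Q] (K : Subgroup (FreeGroup A))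
    (δ : Q → A × Bool → Q) (q₀ : Q)
    -- complete inverse automaton: each letter acts with inverse given by the involution
    (hinv : ∀ (q : Q) (a : A) (b : Bool), δ (δ q (a, b)) (a, !b) = q)
    -- connected with basepoint q₀:
    (hconn : ∀ q : Q, ∃ w : List (A × Bool), readT δ q₀ w = q)
    -- loops at the basepoint spell exactly the words representing elements of K:
    (hlink : ∀ w : List (A × Bool), FreeGroup.mk w ∈ K ↔ readT δ q₀ w = q₀)
    (hK : K ≠ ⊥) :
    K.Normal ↔
      ((∀ f ∈ Set.range (fun w : List (A × Bool) => fun q : Q => readT δ q w),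
          ∃ g ∈ Set.range (fun w : List (A × Bool) => fun q : Q => readT δ q w),
            f ∘ g = id ∧ g ∘ f = id) ∧
        (Set.range (fun w : List (A × Bool) => fun q : Q => readT δ q w)).ncard =
          Fintype.card Q) :=
  stmt_6_general K δ q₀ hinv hconn hlink
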